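/- arXiv:1805.04427 — 5 statements merged into one kernel-verified Lean document; each statement's English description precedes it below -/
import Mathlib

section
/- Let n be an even integer with n ≥ 2 and set m = 3n/2. Then for every integer N with 1 ≤ N ≤ 3n/2 there exists an element σ of the subgroup C(n, m) of S_m generated by the n-crossing permutations such that σ(1) = N. -/
/-
Write `π_j` for `crossPerm n j`. On `{j, …, j + n - 2}` the product `π_{j+1} π_j` is the
translation `i ↦ i + 2`, so chaining such products carries `1` to every odd number in
`{1, …, m}` as soon as `n < m`. For even `n`, `π_1` reverses `{1, …, n}` and `π_{m-n+1}` reverses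
`{m - n + 1, …, m}`, swapping parities; when `m ≤ 2n` these two blocks cover `{1, …, m}`, so every
even number is the image of an odd one.
-/

/-- The underlying function of the `n`-crossing permutation `π_j` over `{1, …, m}` (as a
function on `ℕ`): it sends `j + k` to `j + n - 1 - k` for `0 ≤ k ≤ n - 1` and fixes all
other points. -/
def crossFun (n j i : ℕ) : ℕ :=
  if j ≤ i ∧ i < j + n then 2 * j + n - 1 - i else i

lemma crossFun_involutive (n j : ℕ) : Function.Involutive (crossFun n j) := by
  intro i
  unfold crossFun
  split_ifs <;> omega

/-- The `n`-crossing permutation `π_j`, viewed as a permutation of `ℕ` fixing every point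
outside `{j, …, j + n - 1}`. -/
def crossPerm (n j : ℕ) : Equiv.Perm ℕ :=
  Function.Involutive.toPerm _ (crossFun_involutive n j)

/-- `C n m` is the subgroup of the symmetric group `S_m` (realized as permutations of `ℕ`
supported on `{1, …, m}`) generated by the `n`-crossing permutations `π_1, …, π_{m-n+1}`. -/
def C (n m : ℕ) : Subgroup (Equiv.Perm ℕ) :=
  Subgroup.closure {σ | ∃ j, 1 ≤ j ∧ j ≤ m - n + 1 ∧ σ = crossPerm n j}

variable {n m : ℕ}

lemma crossPerm_apply_of_mem {j i : ℕ} (hji : j ≤ i) (hij : i < j + n) :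
    crossPerm n j i = 2 * j + n - 1 - i :=
  if_pos ⟨hji, hij⟩

lemma crossPerm_mem_C {j : ℕ} (hj : 1 ≤ j) (hjm : j ≤ m - n + 1) : crossPerm n j ∈ C n m :=
  Subgroup.subset_closure ⟨j, hj, hjm, rfl⟩

lemma crossPerm_apply_mem_orbit {j a i : ℕ} (hj : 1 ≤ j) (hjm : j ≤ m - n + 1)
    (hi : i ∈ MulAction.orbit (C n m) a) : crossPerm n j i ∈ MulAction.orbit (C n m) a :=
  MulAction.mem_orbit_of_mem_orbit (⟨crossPerm n j, crossPerm_mem_C hj hjm⟩ : C n m) hi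

lemma crossPerm_succ_crossPerm {j i : ℕ} (hji : j ≤ i) (hij : i + 2 ≤ j + n) :
    crossPerm n (j + 1) (crossPerm n j i) = i + 2 := by
  rw [crossPerm_apply_of_mem hji (by omega), crossPerm_apply_of_mem (by omega) (by omega)]
  omega

lemma add_two_mem_orbit_C (hn : 2 ≤ n) (hnm : n < m) {a i : ℕ} (hi : 1 ≤ i) (him : i + 2 ≤ m)
    (hmem : i ∈ MulAction.orbit (C n m) a) : i + 2 ∈ MulAction.orbit (C n m) a := by
  obtain ⟨j, hj, hjm, hji, hij⟩ : ∃ j, 1 ≤ j ∧ j ≤ m - n ∧ j ≤ i ∧ i + 2 ≤ j + n :=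
    ⟨min i (m - n), by omega, by omega, by omega, by omega⟩
  rw [← crossPerm_succ_crossPerm hji hij]
  exact crossPerm_apply_mem_orbit (by omega) (by omega)
    (crossPerm_apply_mem_orbit hj (by omega) hmem)

lemma odd_mem_orbit_one_C (hn : 2 ≤ n) (hnm : n < m) {k : ℕ} (hk : 2 * k + 1 ≤ m) :
    2 * k + 1 ∈ MulAction.orbit (C n m) 1 := by
  induction k with
  | zero => exact MulAction.mem_orbit_self 1
  | succ k ih => exact add_two_mem_orbit_C hn hnm (by omega) (by omega) (ih (by omega))

lemma mem_orbit_one_C (hn : Even n) (hn2 : 2 ≤ n) (hnm : n < m) (hm : m ≤ 2 * n)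
    {v : ℕ} (hv : 1 ≤ v) (hvm : v ≤ m) : v ∈ MulAction.orbit (C n m) 1 := by
  obtain ⟨k, rfl | rfl⟩ := Nat.even_or_odd' v
  · obtain ⟨t, rfl⟩ := hn
    rcases le_or_gt (2 * k) (t + t) with hkn | hkn
    · obtain ⟨w, hw⟩ : ∃ w, 2 * w + 1 = t + t + 1 - 2 * k := ⟨t - k, by omega⟩
      have hrev : crossPerm (t + t) 1 (2 * w + 1) = 2 * k := by
        rw [crossPerm_apply_of_mem (by omega) (by omega)]; omega
      rw [← hrev]
      exact crossPerm_apply_mem_orbit le_rfl (by omega) (odd_mem_orbit_one_C hn2 hnm (by omega))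
    · obtain ⟨w, hw⟩ : ∃ w, 2 * w + 1 = 2 * m - (t + t) + 1 - 2 * k := ⟨m - t - k, by omega⟩
      have hrev : crossPerm (t + t) (m - (t + t) + 1) (2 * w + 1) = 2 * k := by
        rw [crossPerm_apply_of_mem (by omega) (by omega)]; omega
      rw [← hrev]
      exact crossPerm_apply_mem_orbit (by omega) le_rfl (odd_mem_orbit_one_C hn2 hnm (by omega))
  · exact odd_mem_orbit_one_C hn2 hnm hvm

theorem stmt0 (n : ℕ) (hn : Even n) (hn2 : 2 ≤ n)
    (N : ℕ) (hN1 : 1 ≤ N) (hN2 : N ≤ 3 * n / 2) :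
    ∃ σ ∈ C n (3 * n / 2), σ 1 = N := by
  obtain ⟨σ, hσ⟩ := MulAction.mem_orbit_iff.mp
    (mem_orbit_one_C hn hn2 (by omega) (by omega) hN1 hN2)
  exact ⟨σ, σ.2, hσ⟩
end

section
/- Let n be an even integer with n ≥ 2, let t ≥ 1, and let 0 = l_0 < l_1 < l_2 < ⋯ < l_t be integers. Set m = l_t + 3n − 3 and let τ ∈ S_m be the product of the cycles (1, 2, …, l_1)(l_1+1, …, l_2)⋯(l_{t−1}+1, …, l_t). Then for every strictly increasing sequence of integers 1 ≤ a_1 < a_2 < ⋯ < a_{l_t} ≤ l_t + 3n − 3 there exists g ∈ C(n, m) such that g τ g⁻¹ equals the product of cycles (a_1, …, a_{l_1})(a_{l_1+1}, …, a_{l_2})⋯(a_{l_{t−1}+1}, …, a_{l_t}). -/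
open Equiv

theorem List.formPerm_map_perm {α : Type*} [DecidableEq α] (f : Equiv.Perm α) :
    ∀ l : List α, (l.map f).formPerm = f * l.formPerm * f⁻¹
  | [] => by simp
  | [x] => by simp
  | x :: y :: l => by
    have ih := List.formPerm_map_perm f (y :: l)
    rw [List.map_cons] at ih
    rw [List.map_cons, List.map_cons, List.formPerm_cons_cons, ih, List.formPerm_cons_cons,
      swap_apply_apply]
    group

theorem List.formPerm_map_mem {α : Type*} [DecidableEq α] {H : Subgroup (Equiv.Perm α)}
    {f : Equiv.Perm α} {l : List α} (hf : f ∈ H) (hl : l.formPerm ∈ H) :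
    (l.map f).formPerm ∈ H := by
  rw [List.formPerm_map_perm]
  exact mul_mem (mul_mem hf hl) (inv_mem hf)

theorem Equiv.Perm.apply_mem_of_mem_fixingSubgroup_compl {α : Type*} {s : Set α} {g : Perm α}
    (hg : g ∈ fixingSubgroup (Perm α) sᶜ) {x : α} (hx : x ∈ s) : g x ∈ s :=
  orbit_fixingSubgroup_compl_subset (Perm α) α hx
    (MulAction.mem_orbit x (⟨g, hg⟩ : fixingSubgroup _ _))

theorem conj_prod_map_formPerm {ι α : Type*} [DecidableEq α] (g : Perm α) (f : α → α)
    (I : List ι) (c : ι → List α) (h : ∀ s ∈ I, ∀ x ∈ c s, g x = f x) :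
    g * (I.map fun s => (c s).formPerm).prod * g⁻¹ =
      (I.map fun s => ((c s).map f).formPerm).prod := by
  rw [← MulAut.conj_apply, map_list_prod, List.map_map]
  refine congrArg List.prod (List.map_congr_left fun s hs => ?_)
  rw [Function.comp_apply, MulAut.conj_apply, ← List.formPerm_map_perm]
  exact congrArg List.formPerm (List.map_congr_left (h s hs))

lemma crossPerm_apply (n j i : ℕ) :
    crossPerm n j i = if j ≤ i ∧ i < j + n then 2 * j + n - 1 - i else i := rfl

lemma crossPerm_mem {n m j : ℕ} (hj : 1 ≤ j) (hjm : j + n ≤ m + 1) : crossPerm n j ∈ C n m :=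
  Subgroup.subset_closure ⟨j, hj, by omega, rfl⟩

lemma C_le_fixingSubgroup {n m : ℕ} (hnm : n ≤ m) :
    C n m ≤ fixingSubgroup (Perm ℕ) (Set.Icc 1 m)ᶜ := by
  refine Subgroup.closure_le _ |>.2 ?_
  rintro _ ⟨j, hj, hjm, rfl⟩
  refine mem_fixingSubgroup_iff _ |>.2 fun x hx => ?_
  simp only [Set.mem_compl_iff, Set.mem_Icc, not_and_or, not_le] at hx
  rw [Perm.smul_def, crossPerm_apply, if_neg (by omega)]

lemma crossPerm_succ_mul_crossPerm_apply (n j i : ℕ) :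
    (crossPerm n (j + 1) * crossPerm n j) i =
      if j ≤ i ∧ i ≤ j + n then j + (i - j + 2) % (n + 1) else i := by
  simp only [Perm.mul_apply, crossPerm_apply]
  rcases Nat.eq_zero_or_pos n with rfl | hn
  · split_ifs <;> omega
  by_cases hw : j ≤ i ∧ i ≤ j + n
  · rw [if_pos hw]
    rcases Nat.lt_or_ge (i - j + 2) (n + 1) with h | h
    · rw [Nat.mod_eq_of_lt h]; split_ifs <;> omega
    · rw [Nat.mod_eq_sub_mod h, Nat.mod_eq_of_lt (by omega)]; split_ifs <;> omega
  · rw [if_neg hw]; split_ifs <;> omega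

lemma crossPerm_succ_mul_crossPerm_pow_apply (n j p i : ℕ) :
    ((crossPerm n (j + 1) * crossPerm n j) ^ p) i =
      if j ≤ i ∧ i ≤ j + n then j + (i - j + 2 * p) % (n + 1) else i := by
  induction p with
  | zero =>
    simp only [pow_zero, Perm.one_apply, mul_zero, add_zero]
    split_ifs
    · rw [Nat.mod_eq_of_lt (by omega)]; omega
    · rfl
  | succ p ih =>
    have hlt := Nat.mod_lt (i - j + 2 * p) (by omega : 0 < n + 1)
    rw [pow_succ', Perm.mul_apply, ih, crossPerm_succ_mul_crossPerm_apply]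
    split_ifs with hw <;> try omega
    rw [Nat.add_sub_cancel_left, Nat.mod_add_mod]
    ring_nf

-- `π_{j+1} π_j` rotates `j, …, j + n` by two steps; for even `n`, `2 (n / 2 + 1) = (n + 1) + 1`.
def windowRotation (n j : ℕ) : Perm ℕ := (crossPerm n (j + 1) * crossPerm n j) ^ (n / 2 + 1)

lemma windowRotation_apply {n : ℕ} (hn : Even n) (j i : ℕ) :
    windowRotation n j i = if j ≤ i ∧ i < j + n then i + 1 else if i = j + n then j else i := by
  obtain ⟨q, rfl⟩ := hn
  rw [windowRotation, crossPerm_succ_mul_crossPerm_pow_apply,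
    show (q + q) / 2 + 1 = q + 1 by omega]
  by_cases hw : j ≤ i ∧ i ≤ j + (q + q)
  · rw [if_pos hw, show i - j + 2 * (q + 1) = i - j + 1 + (q + q + 1) by omega, Nat.add_mod_right]
    rcases Nat.lt_or_ge (i - j + 1) (q + q + 1) with h | h
    · rw [Nat.mod_eq_of_lt h]; split_ifs <;> omega
    · rw [show i - j + 1 = q + q + 1 by omega, Nat.mod_self]; split_ifs <;> omega
  · rw [if_neg hw]; split_ifs <;> omega

lemma windowRotation_mem {n m j : ℕ} (hj : 1 ≤ j) (hjm : j + n ≤ m) :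
    windowRotation n j ∈ C n m :=
  pow_mem (mul_mem (crossPerm_mem (by omega) (by omega)) (crossPerm_mem hj (by omega))) _

lemma formPerm_consecutive_apply (i x : ℕ) :
    [i, i + 2, i + 1].formPerm x =
      if x = i then i + 2 else if x = i + 2 then i + 1 else if x = i + 1 then i else x := by
  simp only [List.formPerm_cons_cons, List.formPerm_singleton, mul_one, Perm.mul_apply,
    swap_apply_def]
  split_ifs <;> omega

section ThreeCycles

variable {n m : ℕ}

lemma formPerm_three_eq_windowRotation_mul_inv (hn : Even n) (hn1 : 1 ≤ n) (j : ℕ) :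
    [j, j + 1, j + n + 1].formPerm = windowRotation n j * (windowRotation n (j + 1))⁻¹ := by
  rw [eq_mul_inv_iff_mul_eq]
  ext i
  simp only [Perm.mul_apply, windowRotation_apply hn, List.formPerm_cons_cons,
    List.formPerm_singleton, mul_one, swap_apply_def]
  split_ifs <;> omega

lemma formPerm_consecutive_mem_of_add_lt (hn : Even n) (hn2 : 2 ≤ n) {j : ℕ} (hj : 1 ≤ j)
    (hjm : j + n < m) : [j, j + 2, j + 1].formPerm ∈ C n m := by
  have hρ : windowRotation n (j + 1) ∈ C n m := windowRotation_mem (by omega) (by omega)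
  have hc : [j, j + 1, j + n + 1].formPerm ∈ C n m := by
    rw [formPerm_three_eq_windowRotation_mul_inv hn (by omega)]
    exact mul_mem (windowRotation_mem hj (by omega)) (inv_mem hρ)
  have hmap : [j, j + 1, j + n + 1].map (windowRotation n (j + 1)) = [j, j + 2, j + 1] := by
    simp only [List.map_cons, List.map_nil, windowRotation_apply hn]
    split_ifs <;> first | rfl | omega
  simpa only [hmap] using List.formPerm_map_mem hρ hc

lemma formPerm_consecutive_mem_iff_succ (hn : Even n) {k i : ℕ} (hk : 1 ≤ k) (hkm : k + n ≤ m)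
    (hki : k ≤ i) (hik : i + 3 ≤ k + n) :
    [i, i + 2, i + 1].formPerm ∈ C n m ↔ [i + 1, i + 3, i + 2].formPerm ∈ C n m := by
  have hρ : windowRotation n k ∈ C n m := windowRotation_mem hk hkm
  have hmap : [i, i + 2, i + 1].map (windowRotation n k) = [i + 1, i + 3, i + 2] := by
    simp only [List.map_cons, List.map_nil, windowRotation_apply hn]
    split_ifs <;> first | rfl | omega
  refine ⟨fun h => hmap ▸ List.formPerm_map_mem hρ h, fun h => ?_⟩
  have := List.formPerm_map_mem (inv_mem hρ) h
  rwa [← hmap, List.map_map, ← Perm.coe_mul, inv_mul_cancel, Perm.coe_one, List.map_id] at this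

lemma formPerm_consecutive_mem (hn : Even n) (hn2 : 2 ≤ n) (hm : n + 2 ≤ m) {i : ℕ}
    (hi : 1 ≤ i) (him : i + 2 ≤ m) : [i, i + 2, i + 1].formPerm ∈ C n m := by
  obtain rfl | hn4 : n = 2 ∨ 4 ≤ n := by obtain ⟨q, rfl⟩ := hn; omega
  · have h : [i, i + 2, i + 1].formPerm = (windowRotation 2 i)⁻¹ := by
      rw [eq_inv_iff_mul_eq_one]
      ext x
      simp only [Perm.mul_apply, windowRotation_apply hn, formPerm_consecutive_apply,
        Perm.one_apply]
      split_ifs <;> omega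
    exact h ▸ inv_mem (windowRotation_mem hi him)
  induction i, hi using Nat.le_induction with
  | base => exact formPerm_consecutive_mem_of_add_lt hn hn2 le_rfl (by omega)
  | succ i hi ih =>
    exact (formPerm_consecutive_mem_iff_succ hn (k := min i (m - n)) (by omega) (by omega)
      (by omega) (by omega)).1 (ih (by omega))

end ThreeCycles

section Sorting

variable {H : Subgroup (Perm ℕ)} {m : ℕ}

lemma exists_mem_apply_eq_succ
    (hcyc : ∀ i, 1 ≤ i → i + 2 ≤ m → [i, i + 2, i + 1].formPerm ∈ H) {k : ℕ} (hk : k + 3 ≤ m) :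
    ∀ p, k < p → p ≤ m → ∃ σ ∈ H, σ p = k + 1 ∧ ∀ q ≤ k, σ q = q := by
  intro p hkp hpm
  induction p, hkp using Nat.le_induction with
  | base => exact ⟨1, one_mem H, rfl, fun _ _ => rfl⟩
  | succ p hkp ih =>
    obtain ⟨σ, hσ, hσp, hσq⟩ := ih (by omega)
    -- `[i, i + 2, i + 1]` moves both `i + 2` and `i + 1` one step down
    obtain ⟨c, hc, hcp, hcq⟩ : ∃ c ∈ H, c (p + 1) = p ∧ ∀ q ≤ k, c q = q :=
      ⟨_, hcyc (max (p - 1) (k + 1)) (by omega) (by omega),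
        by rw [formPerm_consecutive_apply]; split_ifs <;> omega,
        fun q hq => by rw [formPerm_consecutive_apply]; split_ifs <;> omega⟩
    exact ⟨σ * c, mul_mem hσ hc, by rw [Perm.mul_apply, hcp, hσp],
      fun q hq => by rw [Perm.mul_apply, hcq q hq, hσq q hq]⟩

lemma exists_mem_apply_eq_of_injOn (hH : H ≤ fixingSubgroup (Perm ℕ) (Set.Icc 1 m)ᶜ)
    (hcyc : ∀ i, 1 ≤ i → i + 2 ≤ m → [i, i + 2, i + 1].formPerm ∈ H) {L : ℕ} (hL : L + 2 ≤ m)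
    {a : ℕ → ℕ} (ha : Set.InjOn a (Set.Icc 1 L)) (ham : Set.MapsTo a (Set.Icc 1 L) (Set.Icc 1 m)) :
    ∃ g ∈ H, ∀ j ∈ Set.Icc 1 L, g (a j) = j := by
  suffices ∀ k ≤ L, ∃ g ∈ H, ∀ j ∈ Set.Icc 1 k, g (a j) = j from this L le_rfl
  intro k hk
  induction k with
  | zero => exact ⟨1, one_mem H, fun j hj => absurd (hj.1.trans hj.2) (by norm_num)⟩
  | succ k ih =>
    obtain ⟨g, hg, hga⟩ := ih (by omega)
    have hak : k + 1 ∈ Set.Icc 1 L := ⟨by omega, hk⟩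
    have hp := Perm.apply_mem_of_mem_fixingSubgroup_compl (hH hg) (ham hak)
    have hkp : k < g (a (k + 1)) := by
      by_contra! h
      have hj : g (a (k + 1)) ∈ Set.Icc 1 L := ⟨hp.1, by omega⟩
      have := ha hj hak (g.injective (hga _ ⟨hp.1, h⟩))
      omega
    obtain ⟨σ, hσ, hσp, hσq⟩ := exists_mem_apply_eq_succ hcyc (by omega) _ hkp hp.2
    refine ⟨σ * g, mul_mem hσ hg, fun j hj => ?_⟩
    rcases eq_or_lt_of_le hj.2 with rfl | hjk
    · exact hσp
    · rw [Perm.mul_apply, hga j ⟨hj.1, by omega⟩, hσq j (by omega)]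

end Sorting

theorem stmt2_general (n : ℕ) (hn : Even n) (hn2 : 2 ≤ n)
    (t : ℕ) (ht : 1 ≤ t) (l : ℕ → ℕ)
    (hl : ∀ s < t, l s < l (s + 1))
    (a : ℕ → ℕ) (ha1 : 1 ≤ a 1)
    (hamono : ∀ i, 1 ≤ i → i < l t → a i < a (i + 1))
    (halast : a (l t) ≤ l t + 3 * n - 3) :
    ∃ g ∈ C n (l t + 3 * n - 3),
      g * ((List.range t).map
            (fun s => (List.range' (l s + 1) (l (s + 1) - l s)).formPerm)).prod * g⁻¹ =
        ((List.range t).map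
            (fun s => ((List.range' (l s + 1) (l (s + 1) - l s)).map a).formPerm)).prod := by
  have hl_mono : StrictMonoOn l (Set.Iic t) :=
    strictMonoOn_of_lt_succ Set.ordConnected_Iic fun s _ _ hs => by
      simp only [Order.succ_eq_add_one, Set.mem_Iic] at hs ⊢
      exact hl s hs
  have ha_mono : StrictMonoOn a (Set.Icc 1 (l t)) :=
    strictMonoOn_of_lt_succ Set.ordConnected_Icc fun i _ hi hi' => by
      simp only [Order.succ_eq_add_one, Set.mem_Icc] at hi' ⊢
      exact hamono i hi.1 hi'.2
  have hlt : 1 ≤ l t := (hl_mono (by simp) (by simp) ht).trans_le' (Nat.zero_le _)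
  have ham : Set.MapsTo a (Set.Icc 1 (l t)) (Set.Icc 1 (l t + 3 * n - 3)) := fun i hi =>
    ⟨ha1.trans (ha_mono.monotoneOn ⟨le_rfl, hlt⟩ hi hi.1),
      (ha_mono.monotoneOn hi ⟨hlt, le_rfl⟩ hi.2).trans halast⟩
  obtain ⟨g, hg, hga⟩ := exists_mem_apply_eq_of_injOn (C_le_fixingSubgroup (by omega))
    (fun i => formPerm_consecutive_mem hn hn2 (by omega)) (by omega) ha_mono.injOn ham
  refine ⟨g⁻¹, inv_mem hg, conj_prod_map_formPerm _ _ _ _ fun s hs x hx => ?_⟩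
  have hs : s < t := List.mem_range.1 hs
  have hx := List.mem_range'_1.1 hx
  have hlst : l (s + 1) ≤ l t := hl_mono.monotoneOn (Set.mem_Iic.2 hs) (Set.mem_Iic.2 le_rfl) hs
  rw [Perm.inv_eq_iff_eq, hga x ⟨by omega, by omega⟩]

theorem stmt2 (n : ℕ) (hn : Even n) (hn2 : 2 ≤ n)
    (t : ℕ) (ht : 1 ≤ t) (l : ℕ → ℕ) (hl0 : l 0 = 0)
    (hl : ∀ s < t, l s < l (s + 1))
    (a : ℕ → ℕ) (ha1 : 1 ≤ a 1)
    (hamono : ∀ i, 1 ≤ i → i < l t → a i < a (i + 1))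
    (halast : a (l t) ≤ l t + 3 * n - 3) :
    ∃ g ∈ C n (l t + 3 * n - 3),
      g * ((List.range t).map
            (fun s => (List.range' (l s + 1) (l (s + 1) - l s)).formPerm)).prod * g⁻¹ =
        ((List.range t).map
            (fun s => ((List.range' (l s + 1) (l (s + 1) - l s)).map a).formPerm)).prod :=
  stmt2_general n hn hn2 t ht l hl a ha1 hamono halast
end

section
/- Let n be an integer with n ≡ 0 (mod 4) and n ≥ 4, and let m be an integer with m ≥ 3n + 1. Then for all integers a, b with 1 ≤ a, a + 1 < b, and b + 1 ≤ m, the product of disjoint adjacent transpositions (a, a+1)(b, b+1) belongs to C(n, m). -/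
open Equiv Equiv.Perm

namespace CrossingGroup

/-- The 3-cycle `x ↦ y ↦ z ↦ x`. -/
def cycle3 (x y z : ℕ) : Perm ℕ := swap x y * swap y z

theorem conj_cycle3 (σ : Perm ℕ) (x y z : ℕ) :
    σ * cycle3 x y z * σ⁻¹ = cycle3 (σ x) (σ y) (σ z) := by
  rw [cycle3, cycle3, swap_apply_apply, swap_apply_apply]
  group

theorem swap_mul_swap_mem_of_cycle3_mem (H : Subgroup (Perm ℕ)) {a b : ℕ} (hab : a ≤ b)
    (h : ∀ k, a ≤ k → k < b → cycle3 k (k + 1) (k + 2) ∈ H) :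
    swap a (a + 1) * swap b (b + 1) ∈ H := by
  induction b, hab using Nat.le_induction with
  | base => simp
  | succ b hab ih =>
    have htele : swap a (a + 1) * swap (b + 1) (b + 1 + 1)
        = swap a (a + 1) * swap b (b + 1) * cycle3 b (b + 1) (b + 2) := by
      simp [cycle3, mul_assoc]
    rw [htele]
    exact mul_mem (ih fun k hk hkb => h k hk (by omega)) (h b hab (by omega))

theorem crossPerm_mul_succ_apply {n : ℕ} (hn : 0 < n) (j i : ℕ) :
    (crossPerm n j * crossPerm n (j + 1)) i =
      if j ≤ i ∧ i ≤ j + 1 then i + n - 1 else if j + 2 ≤ i ∧ i ≤ j + n then i - 2 else i := by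
  simp only [crossPerm, mul_apply, Function.Involutive.coe_toPerm, crossFun]
  split_ifs <;> omega

theorem crossPerm_mul_succ_pow_apply {n k : ℕ} (hk : 2 * k ≤ n) (j i : ℕ) :
    ((crossPerm n j * crossPerm n (j + 1)) ^ k) i =
      if j ≤ i ∧ i ≤ j + n then
        (if i < j + 2 * k then i + (n + 1) - 2 * k else i - 2 * k)
      else i := by
  induction k generalizing i with
  | zero => simp only [pow_zero, one_apply]; split_ifs <;> omega
  | succ k ih =>
    rw [pow_succ, mul_apply, crossPerm_mul_succ_apply (by omega), ih (by omega)]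
    split_ifs <;> omega

/-- The rotation `j ↦ j + 1 ↦ ⋯ ↦ j + n ↦ j` of the window `{j, …, j + n}`, for even `n`. -/
def crossRot (n j : ℕ) : Perm ℕ := (crossPerm n j * crossPerm n (j + 1)) ^ (n / 2)

theorem crossRot_apply {n : ℕ} (hn : Even n) (j i : ℕ) :
    crossRot n j i = if j ≤ i ∧ i < j + n then i + 1 else if i = j + n then j else i := by
  obtain ⟨r, rfl⟩ := hn
  rw [crossRot, crossPerm_mul_succ_pow_apply (by omega)]
  split_ifs <;> omega

theorem crossPerm_mem_C {n m j : ℕ} (hj : 1 ≤ j) (hjm : j + n ≤ m + 1) : crossPerm n j ∈ C n m :=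
  Subgroup.subset_closure ⟨j, hj, by omega, rfl⟩

theorem crossRot_mem_C {n m j : ℕ} (hj : 1 ≤ j) (hjm : j + n ≤ m) : crossRot n j ∈ C n m :=
  pow_mem (mul_mem (crossPerm_mem_C hj (by omega)) (crossPerm_mem_C (by omega) (by omega))) _

theorem crossRot_mul_inv_crossRot_succ {n : ℕ} (hn : Even n) (hn2 : 2 ≤ n) (j : ℕ) :
    crossRot n j * (crossRot n (j + 1))⁻¹ = cycle3 j (j + 1) (j + n + 1) := by
  rw [mul_inv_eq_iff_eq_mul]
  ext i
  simp only [cycle3, mul_apply, crossRot_apply hn, swap_apply_def]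
  split_ifs <;> omega

theorem cycle3_one_mem_C {n m : ℕ} (hn : Even n) (hn2 : 2 ≤ n) (hm : n + 3 ≤ m) :
    cycle3 1 2 3 ∈ C n m := by
  have hrot : ∀ j, 1 ≤ j → j ≤ 3 → crossRot n j ∈ C n m :=
    fun j hj hj3 => crossRot_mem_C hj (by omega)
  have hconj : crossRot n 3 ^ 2 * cycle3 1 2 (n + 2) * (crossRot n 3 ^ 2)⁻¹ = cycle3 1 2 3 := by
    rw [conj_cycle3]
    simp only [sq, mul_apply, crossRot_apply hn]
    congr 1 <;> split_ifs <;> omega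
  have hcyc : cycle3 1 2 (n + 2) ∈ C n m := by
    rw [show n + 2 = 1 + n + 1 by omega, ← crossRot_mul_inv_crossRot_succ hn hn2]
    exact mul_mem (hrot 1 le_rfl (by omega)) (inv_mem (hrot 2 (by omega) (by omega)))
  rw [← hconj]
  have h3 := pow_mem (hrot 3 (by omega) le_rfl) 2
  exact mul_mem (mul_mem h3 hcyc) (inv_mem h3)

theorem cycle3_succ_mem_C {n m j : ℕ} (hn : Even n) (hn4 : 4 ≤ n) (hnm : n + 1 ≤ m)
    (hj : 1 ≤ j) (hjm : j + 3 ≤ m) (h : cycle3 j (j + 1) (j + 2) ∈ C n m) :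
    cycle3 (j + 1) (j + 1 + 1) (j + 1 + 2) ∈ C n m := by
  obtain ⟨k, hk, hkj, hjk, hkm⟩ : ∃ k, 1 ≤ k ∧ k ≤ j ∧ j + 3 ≤ k + n ∧ k + n ≤ m :=
    if h : j + n ≤ m then ⟨j, by omega⟩ else ⟨m - n, by omega⟩
  have hshift : crossRot n k * cycle3 j (j + 1) (j + 2) * (crossRot n k)⁻¹
      = cycle3 (j + 1) (j + 1 + 1) (j + 1 + 2) := by
    rw [conj_cycle3]
    simp only [crossRot_apply hn]
    congr 1 <;> split_ifs <;> omega
  have hρ : crossRot n k ∈ C n m := crossRot_mem_C hk hkm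
  rw [← hshift]
  exact mul_mem (mul_mem hρ h) (inv_mem hρ)

theorem cycle3_mem_C {n m j : ℕ} (hn : Even n) (hn4 : 4 ≤ n) (hm : n + 3 ≤ m)
    (hj : 1 ≤ j) (hjm : j + 2 ≤ m) : cycle3 j (j + 1) (j + 2) ∈ C n m := by
  induction j, hj using Nat.le_induction with
  | base => exact cycle3_one_mem_C hn (by omega) hm
  | succ j hj ih => exact cycle3_succ_mem_C hn hn4 (by omega) hj (by omega) (ih (by omega))

end CrossingGroup

theorem stmt6 (n : ℕ) (hn : n % 4 = 0) (hn4 : 4 ≤ n)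
    (m : ℕ) (hm : 3 * n + 1 ≤ m)
    (a b : ℕ) (ha : 1 ≤ a) (hab : a + 1 < b) (hb : b + 1 ≤ m) :
    Equiv.swap a (a + 1) * Equiv.swap b (b + 1) ∈ C n m := by
  have heven : Even n := Nat.even_iff.mpr (by omega)
  exact CrossingGroup.swap_mul_swap_mem_of_cycle3_mem (C n m) (by omega) fun k hk hkb =>
    CrossingGroup.cycle3_mem_C heven (by omega) (by omega) (by omega) (by omega)
end

section
/- Let n be an odd integer with n ≥ 3 and let m ≥ n. Then every element σ of C(n, m) preserves parity: σ(i) ≡ i (mod 2) for every i ∈ {1, …, m}. In particular, C(n, m) is contained in the parity-preserving subgroup P_m of S_m. -/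
def invariantPerms {α β : Type*} (f : α → β) : Subgroup (Equiv.Perm α) where
  carrier := {σ | ∀ a, f (σ a) = f a}
  one_mem' _ := rfl
  mul_mem' hσ hτ a := (hσ _).trans (hτ a)
  inv_mem' {σ} hσ a := by simpa using (hσ (σ⁻¹ a)).symm

lemma mem_invariantPerms {α β : Type*} {f : α → β} {σ : Equiv.Perm α} :
    σ ∈ invariantPerms f ↔ ∀ a, f (σ a) = f a :=
  Iff.rfl

-- `(2 * j + n - 1 - i) + i = 2 * j + (n - 1)` is even when `n` is odd.
lemma crossFun_mod_two {n : ℕ} (hn : Odd n) (j i : ℕ) : crossFun n j i % 2 = i % 2 := by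
  obtain ⟨t, rfl⟩ := hn
  unfold crossFun
  split_ifs <;> omega

lemma crossPerm_mem_invariantPerms_mod_two {n : ℕ} (hn : Odd n) (j : ℕ) :
    crossPerm n j ∈ invariantPerms (· % 2) :=
  crossFun_mod_two hn j

lemma C_le_invariantPerms_mod_two {n : ℕ} (hn : Odd n) (m : ℕ) :
    C n m ≤ invariantPerms (· % 2) :=
  (Subgroup.closure_le _).mpr fun _ ⟨j, _, _, hσ⟩ => hσ ▸ crossPerm_mem_invariantPerms_mod_two hn j

theorem stmt7_general (n : ℕ) (hn : Odd n) (m : ℕ)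
    (σ : Equiv.Perm ℕ) (hσ : σ ∈ C n m) :
    ∀ i, 1 ≤ i → i ≤ m → σ i % 2 = i % 2 :=
  fun i _ _ => mem_invariantPerms.mp (C_le_invariantPerms_mod_two hn m hσ) i

theorem stmt7 (n : ℕ) (hn : Odd n) (hn3 : 3 ≤ n) (m : ℕ) (hm : n ≤ m)
    (σ : Equiv.Perm ℕ) (hσ : σ ∈ C n m) :
    ∀ i, 1 ≤ i → i ≤ m → σ i % 2 = i % 2 :=
  stmt7_general n hn m σ hσ
end

section
/- Let n be an integer with n ≡ 5 (mod 8) and set m = (3n−1)/2. Then for every odd integer j with 1 ≤ j and j + 2 ≤ m, there exists g ∈ C(n, m) such that g (1,3) g⁻¹ = (j, j+2), where (1,3) and (j, j+2) denote transpositions. In other words, every odd-string triple-crossing transposition in S_{(3n−1)/2} is obtained by conjugating (1,3) by an element of the subgroup generated by the n-crossing permutations over S_{(3n−1)/2}. -/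
lemma crossPerm_apply_of_le_of_lt {n a i : ℕ} (h₁ : a ≤ i) (h₂ : i < a + n) :
    crossPerm n a i = 2 * a + n - 1 - i :=
  if_pos ⟨h₁, h₂⟩

lemma crossPerm_mem_C_s11 {n m a : ℕ} (h₁ : 1 ≤ a) (h₂ : a ≤ m - n + 1) : crossPerm n a ∈ C n m :=
  Subgroup.subset_closure ⟨a, h₁, h₂, rfl⟩

lemma exists_mem_C_apply_one_three_near {n m a : ℕ} (ha : 1 ≤ a) (han : a + 2 ≤ n)
    (ham : a ≤ m - n + 1) :
    ∃ g ∈ C n m, g 1 = 2 * a - 1 ∧ g 3 = 2 * a + 1 := by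
  have h₁ : crossPerm n 1 1 = n := by
    rw [crossPerm_apply_of_le_of_lt le_rfl (by omega)]; omega
  have h₃ : crossPerm n 1 3 = n - 2 := by
    rw [crossPerm_apply_of_le_of_lt (by omega) (by omega)]; omega
  refine ⟨crossPerm n a * crossPerm n 1,
    mul_mem (crossPerm_mem_C_s11 ha ham) (crossPerm_mem_C_s11 le_rfl (by omega)), ?_, ?_⟩
  · rw [Equiv.Perm.mul_apply, h₁, crossPerm_apply_of_le_of_lt (by omega) (by omega)]
    omega
  · rw [Equiv.Perm.mul_apply, h₃, crossPerm_apply_of_le_of_lt (by omega) (by omega)]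
    omega

lemma exists_mem_C_apply_one_three_far {n m a : ℕ} (ha : 1 ≤ a) (han : a + 2 ≤ n)
    (ham : 2 * a - 1 ≤ m - n + 1) :
    ∃ g ∈ C n m, g 1 = n + 2 * a - 2 ∧ g 3 = n + 2 * a - 4 := by
  obtain ⟨g, hg, hg1, hg3⟩ := exists_mem_C_apply_one_three_near (m := m) ha han (by omega)
  refine ⟨crossPerm n (2 * a - 1) * g,
    mul_mem (crossPerm_mem_C_s11 (by omega) ham) hg, ?_, ?_⟩
  · rw [Equiv.Perm.mul_apply, hg1, crossPerm_apply_of_le_of_lt le_rfl (by omega)]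
    omega
  · rw [Equiv.Perm.mul_apply, hg3, crossPerm_apply_of_le_of_lt (by omega) (by omega)]
    omega

theorem stmt11_general (n : ℕ) (hn : n % 8 = 5)
    (j : ℕ) (hj : j % 2 = 1) (hj2 : j + 2 ≤ (3 * n - 1) / 2) :
    ∃ g ∈ C n ((3 * n - 1) / 2),
      g * Equiv.swap 1 3 * g⁻¹ = Equiv.swap j (j + 2) := by
  simp only [← Equiv.swap_apply_apply]
  rcases le_or_gt j n with hjn | hnj
  · obtain ⟨g, hg, hg1, hg3⟩ :=
      exists_mem_C_apply_one_three_near (n := n) (a := (j + 1) / 2) (m := (3 * n - 1) / 2)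
        (by omega) (by omega) (by omega)
    exact ⟨g, hg, by rw [hg1, hg3]; congr 1 <;> omega⟩
  · obtain ⟨g, hg, hg1, hg3⟩ :=
      exists_mem_C_apply_one_three_far (n := n) (a := (j - n + 4) / 2) (m := (3 * n - 1) / 2)
        (by omega) (by omega) (by omega)
    exact ⟨g, hg, by rw [hg1, hg3, Equiv.swap_comm]; congr 1 <;> omega⟩

theorem stmt11 (n : ℕ) (hn : n % 8 = 5)
    (j : ℕ) (hj : j % 2 = 1) (hj1 : 1 ≤ j) (hj2 : j + 2 ≤ (3 * n - 1) / 2) :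
    ∃ g ∈ C n ((3 * n - 1) / 2),
      g * Equiv.swap 1 3 * g⁻¹ = Equiv.swap j (j + 2) :=
  stmt11_general n hn j hj hj2
end
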